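/- arXiv:2601.11115 — 6 statements merged into one kernel-verified Lean document; each statement's English description precedes it below -/
import Mathlib

section
/- Lower bound on the objective in case A: assume 0 < γ ≤ 1/β and β > 0. Then every feasible pair (x, y) of the simplified MUST-M problem satisfies ∑_v (x_v + γ·y_v) ≥ X̃ − (1/β − γ)·min(Y, Z/γ, β·X̃). -/
open Finset

/-- Feasibility for the simplified MUST-M problem. -/
def Feasible {V : Type*} [Fintype V] (xt : V → ℝ) (β γ X' Y Z : ℝ)
    (x y : V → ℝ) : Prop :=
  (∀ v, 0 ≤ x v) ∧ (∀ v, 0 ≤ y v) ∧ (∀ v, xt v ≤ x v + (1 / β) * y v) ∧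
  (∑ v, (x v + γ * y v)) ≤ X' ∧ (∑ v, y v) ≤ Y ∧ (∑ v, γ * y v) ≤ Z

/-! Baseline time is covered by actual time `x` at objective cost 1 per unit, or by avatar time `y`
at cost `γ` per `1/β` units. Since `γ ≤ 1/β`, the saving `∑ xt - ∑ (x + γ y)` is at most
`(1/β - γ) ∑ y`, and `∑ y` is bounded by `Y` and by `Z/γ`. The third term of the minimum comes
from the cost `γ β ∑ xt` that every feasible pair pays even when all coverage is by avatar. -/

lemma le_mul_min_min {a c s u w t : ℝ} (hc : 0 ≤ c) (hs : a ≤ c * s) (hsu : s ≤ u)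
    (hsw : s ≤ w) (ht : a ≤ c * t) : a ≤ c * min u (min w t) := by
  rw [← min_assoc]
  rcases min_choice (min u w) t with h | h <;> rw [h]
  · exact hs.trans (mul_le_mul_of_nonneg_left (le_min hsu hsw) hc)
  · exact ht

lemma mul_mul_le_add_of_le_add_div {β γ a x y : ℝ} (hβ : 0 < β) (hγ : 0 ≤ γ)
    (hγβ : γ ≤ 1 / β) (hx : 0 ≤ x) (h : a ≤ x + 1 / β * y) :
    γ * β * a ≤ x + γ * y := by
  have hγβ' : γ * β ≤ 1 := by rwa [le_div_iff₀ hβ] at hγβ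
  calc γ * β * a ≤ γ * β * (x + 1 / β * y) := mul_le_mul_of_nonneg_left h (by positivity)
    _ = γ * β * x + γ * y := by field_simp
    _ ≤ x + γ * y := by gcongr; exact mul_le_of_le_one_left hx hγβ'

section

variable {V : Type*} [Fintype V] {xt x y : V → ℝ} {β γ : ℝ}

lemma sum_le_sum_add_mul_sum_of_le_add_div (hcov : ∀ v, xt v ≤ x v + 1 / β * y v) :
    ∑ v, xt v ≤ ∑ v, (x v + γ * y v) + (1 / β - γ) * ∑ v, y v := by
  rw [mul_sum, ← sum_add_distrib]
  exact sum_le_sum fun v _ => (hcov v).trans_eq (by ring)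

lemma mul_mul_sum_le_sum_of_le_add_div (hβ : 0 < β) (hγ : 0 ≤ γ) (hγβ : γ ≤ 1 / β)
    (hx : ∀ v, 0 ≤ x v) (hcov : ∀ v, xt v ≤ x v + 1 / β * y v) :
    γ * β * ∑ v, xt v ≤ ∑ v, (x v + γ * y v) := by
  rw [mul_sum]
  exact sum_le_sum fun v _ => mul_mul_le_add_of_le_add_div hβ hγ hγβ (hx v) (hcov v)

end

theorem mustm_caseA_lower_bound_general {V : Type*} [Fintype V]
    (xt : V → ℝ) (β γ X' Y Z : ℝ)
    (hβ : 0 < β) (hγ : 0 < γ) (hγβ : γ ≤ 1 / β)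
    (x y : V → ℝ) (hfeas : Feasible xt β γ X' Y Z x y) :
    (∑ v, xt v) - (1 / β - γ) * min Y (min (Z / γ) (β * ∑ v, xt v)) ≤
      ∑ v, (x v + γ * y v) := by
  obtain ⟨hx, -, hcov, -, hsumY, hsumZ⟩ := hfeas
  have hsumZγ : ∑ v, y v ≤ Z / γ := (le_div_iff₀' hγ).2 (by rwa [mul_sum])
  have by_avatar := sum_le_sum_add_mul_sum_of_le_add_div (γ := γ) hcov
  have by_baseline := mul_mul_sum_le_sum_of_le_add_div hβ hγ.le hγβ hx hcov
  have hbaseline : (1 / β - γ) * (β * ∑ v, xt v) = ∑ v, xt v - γ * β * ∑ v, xt v := by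
    field_simp
  refine sub_le_comm.1 (le_mul_min_min (sub_nonneg.2 hγβ) ?_ hsumY hsumZγ ?_) <;> linarith

/-- Lower bound on the objective of the simplified MUST-M problem in
case A (`0 < γ ≤ 1/β`). -/
theorem mustm_caseA_lower_bound {V : Type*} [Fintype V]
    (xt : V → ℝ) (β γ X' Y Z : ℝ)
    (hxt : ∀ v, 0 ≤ xt v) (hβ : 0 < β) (hγ : 0 < γ) (hγβ : γ ≤ 1 / β)
    (hY : 0 ≤ Y) (hZ : 0 ≤ Z)
    (x y : V → ℝ) (hfeas : Feasible xt β γ X' Y Z x y) :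
    (∑ v, xt v) - (1 / β - γ) * min Y (min (Z / γ) (β * ∑ v, xt v)) ≤
      ∑ v, (x v + γ * y v) :=
  mustm_caseA_lower_bound_general xt β γ X' Y Z hβ hγ hγβ x y hfeas
end

section
/- Optimal value of the simplified MUST-M problem in case A: assume 0 < γ ≤ 1/β, β > 0, Y ≥ 0, Z ≥ 0, and X̃' = X̃. Then the minimum of ∑_v (x_v + γ·y_v) over all feasible pairs (x, y) exists, is attained by a feasible pair, and equals X̃ − (1/β − γ)·min(Y, Z/γ, β·X̃). -/
open Finset

/-!
A unit of avatar time covers `1/β` units of baseline at cost `γ`, saving `1/β - γ ≥ 0`, but only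
the avatar time `min (y v) (β * xt v)` that is actually needed for the baseline of `v` earns
this saving. Summing, the saving is at most `(1/β - γ)` times `min (∑ y) (β X̃)`, which the
budget constraints bound by `min Y (Z/γ) (β X̃)`. The bound is attained by shifting the same
fraction `s` of every baseline to avatar time, with `s β X̃` equal to that minimum.
-/

lemma sub_mul_min_le_add_mul {β γ a x y : ℝ} (hβ : 0 < β) (hγ : 0 ≤ γ) (hx : 0 ≤ x)
    (hcover : a ≤ x + 1 / β * y) :
    a - (1 / β - γ) * min y (β * a) ≤ x + γ * y := by
  rcases le_total y (β * a) with hya | hay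
  · rw [min_eq_left hya]
    linarith
  · have hsaving : a - (1 / β - γ) * (β * a) = γ * (β * a) := by
      field_simp
      ring
    rw [min_eq_right hay, hsaving]
    linarith [mul_le_mul_of_nonneg_left hay hγ]

section

variable {V : Type*} [Fintype V] {xt : V → ℝ} {β γ Y Z : ℝ}

theorem Feasible.le_objective {X' : ℝ} {x y : V → ℝ} (h : Feasible xt β γ X' Y Z x y)
    (hβ : 0 < β) (hγ : 0 < γ) (hγβ : γ ≤ 1 / β) :
    (∑ v, xt v) - (1 / β - γ) * min Y (min (Z / γ) (β * ∑ v, xt v)) ≤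
      ∑ v, (x v + γ * y v) := by
  obtain ⟨hx, -, hcover, -, hY, hZ⟩ := h
  have hS_le_sum_y : ∑ v, min (y v) (β * xt v) ≤ ∑ v, y v :=
    sum_le_sum fun v _ => min_le_left _ _
  have hsum_y_le : ∑ v, y v ≤ Z / γ := by
    rwa [le_div_iff₀' hγ, mul_sum]
  have hS_le_X : ∑ v, min (y v) (β * xt v) ≤ β * ∑ v, xt v := by
    rw [mul_sum]
    exact sum_le_sum fun v _ => min_le_right _ _
  calc (∑ v, xt v) - (1 / β - γ) * min Y (min (Z / γ) (β * ∑ v, xt v))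
      ≤ (∑ v, xt v) - (1 / β - γ) * ∑ v, min (y v) (β * xt v) := by
        gcongr
        exact le_min (hS_le_sum_y.trans hY) (le_min (hS_le_sum_y.trans hsum_y_le) hS_le_X)
    _ = ∑ v, (xt v - (1 / β - γ) * min (y v) (β * xt v)) := by
        rw [sum_sub_distrib, mul_sum]
    _ ≤ ∑ v, (x v + γ * y v) :=
        sum_le_sum fun v _ => sub_mul_min_le_add_mul hβ hγ.le (hx v) (hcover v)

theorem exists_feasible_objective_eq {m : ℝ} (hxt : ∀ v, 0 ≤ xt v) (hβ : 0 < β)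
    (hγβ : γ ≤ 1 / β) (hm : 0 ≤ m) (hmY : m ≤ Y) (hmZ : γ * m ≤ Z)
    (hmX : m ≤ β * ∑ v, xt v) :
    ∃ x y : V → ℝ, Feasible xt β γ (∑ v, xt v) Y Z x y ∧
      ∑ v, (x v + γ * y v) = (∑ v, xt v) - (1 / β - γ) * m := by
  have hβX : 0 ≤ β * ∑ v, xt v := mul_nonneg hβ.le (sum_nonneg fun v _ => hxt v)
  set s := m / (β * ∑ v, xt v)
  -- if `β X̃ = 0` then `m = 0`, so the junk value `s = m / 0 = 0` is still the right fraction
  have hs : s * (β * ∑ v, xt v) = m :=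
    div_mul_cancel_of_imp fun h => le_antisymm (h ▸ hmX) hm
  have hs0 : 0 ≤ s := div_nonneg hm hβX
  have hs1 : s ≤ 1 := div_le_one_of_le₀ hmX hβX
  have hsum_y : ∑ v, s * β * xt v = m := by
    rw [← mul_sum, mul_assoc, hs]
  have hobj : ∑ v, ((1 - s) * xt v + γ * (s * β * xt v)) = (∑ v, xt v) - (1 / β - γ) * m := by
    rw [sum_add_distrib, ← mul_sum, ← mul_sum, hsum_y, ← hs]
    field_simp
    ring
  refine ⟨fun v => (1 - s) * xt v, fun v => s * β * xt v,
    ⟨fun v => ?_, fun v => ?_, fun v => ?_, ?_, ?_, ?_⟩, hobj⟩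
  · exact mul_nonneg (sub_nonneg.mpr hs1) (hxt v)
  · exact mul_nonneg (mul_nonneg hs0 hβ.le) (hxt v)
  · refine le_of_eq ?_
    field_simp
    ring
  · rw [hobj]
    exact sub_le_self _ (mul_nonneg (sub_nonneg.mpr hγβ) hm)
  · rwa [hsum_y]
  · rwa [← mul_sum, hsum_y]

end

/-- Optimal value of the simplified MUST-M problem in case A, when
`X̃' = X̃`: the minimum objective value exists, is attained, and equals
`X̃ − (1/β − γ)·min(Y, Z/γ, β·X̃)`. -/
theorem mustm_caseA_optimal_value {V : Type*} [Fintype V]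
    (xt : V → ℝ) (β γ Y Z : ℝ)
    (hxt : ∀ v, 0 ≤ xt v) (hβ : 0 < β) (hγ : 0 < γ) (hγβ : γ ≤ 1 / β)
    (hY : 0 ≤ Y) (hZ : 0 ≤ Z) :
    IsLeast
      {c : ℝ | ∃ x y : V → ℝ,
        Feasible xt β γ (∑ v, xt v) Y Z x y ∧ c = ∑ v, (x v + γ * y v)}
      ((∑ v, xt v) - (1 / β - γ) * min Y (min (Z / γ) (β * ∑ v, xt v))) := by
  refine ⟨?_, ?_⟩
  · have hm : 0 ≤ min Y (min (Z / γ) (β * ∑ v, xt v)) :=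
      le_min hY (le_min (div_nonneg hZ hγ.le)
        (mul_nonneg hβ.le (sum_nonneg fun v _ => hxt v)))
    have hmZ : γ * min Y (min (Z / γ) (β * ∑ v, xt v)) ≤ Z :=
      (le_div_iff₀' hγ).mp ((min_le_right _ _).trans (min_le_left _ _))
    obtain ⟨x, y, hfeas, hobj⟩ := exists_feasible_objective_eq hxt hβ hγβ hm
      (min_le_left _ _) hmZ ((min_le_right _ _).trans (min_le_right _ _))
    exact ⟨x, y, hfeas, hobj.symm⟩
  · rintro c ⟨x, y, hfeas, rfl⟩
    exact hfeas.le_objective hβ hγ hγβ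
end

section
/- Maximum spare time gained by using the avatar: assume 0 < γ ≤ 1/β, β > 0, Y ≥ 0, Z ≥ 0, and X̃' = X̃. Then the maximum, over all feasible pairs (x, y) of the simplified MUST-M problem, of the spare time X̃' − ∑_v (x_v + γ·y_v) exists, is attained, and equals (1/β − γ)·min(Y, Z/γ, β·X̃); in particular, the spare time gained is nonnegative and is zero when γ = 1/β. -/
open Finset

/-!
Summing the covering constraints `x̃_v ≤ x_v + y_v / β` shows that avatar time `S = ∑ y_v` saves
at most `(1/β - γ) S`, and never more than `(1/β - γ) β X̃`, the saving when the avatar takes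
over all of `X̃`. Since `S ≤ Y` and `γ S ≤ Z`, the spare time is at most
`(1/β - γ) min(Y, Z/γ, β X̃)`. Conversely, letting the avatar replace a common fraction of each
`x̃_v` gains exactly `(1/β - γ) S` for every `S` up to `β X̃`.
-/

theorem sub_add_mul_le_mul_min {X P S β γ : ℝ} (hβ : 0 < β) (hγ : 0 ≤ γ) (hP : 0 ≤ P)
    (hX : X ≤ P + S / β) :
    X - (P + γ * S) ≤ (1 / β - γ) * min S (β * X) := by
  rcases le_total S (β * X) with hS | hS
  · rw [min_eq_left hS]
    calc X - (P + γ * S) ≤ S / β - γ * S := by linarith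
      _ = (1 / β - γ) * S := by ring
  · rw [min_eq_right hS]
    calc X - (P + γ * S) ≤ X - γ * (β * X) := by nlinarith
      _ = (1 / β - γ) * (β * X) := by field_simp

theorem exists_sum_eq_of_le_sum {V : Type*} [Fintype V] {w : V → ℝ} (hw : ∀ v, 0 ≤ w v)
    {m : ℝ} (hm₀ : 0 ≤ m) (hm : m ≤ ∑ v, w v) :
    ∃ y : V → ℝ, (∀ v, 0 ≤ y v ∧ y v ≤ w v) ∧ ∑ v, y v = m := by
  have ht₀ : 0 ≤ m / ∑ v, w v := div_nonneg hm₀ (hm₀.trans hm)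
  have ht₁ : m / ∑ v, w v ≤ 1 := div_le_one_of_le₀ hm (hm₀.trans hm)
  refine ⟨fun v => m / (∑ v, w v) * w v, fun v => ⟨mul_nonneg ht₀ (hw v), ?_⟩, ?_⟩
  · exact mul_le_of_le_one_left (hw v) ht₁
  · rw [← mul_sum]
    exact div_mul_cancel_of_imp fun h => le_antisymm (h ▸ hm) hm₀

section

variable {V : Type*} [Fintype V] {xt : V → ℝ} {β γ X' Y Z : ℝ} {x y : V → ℝ}

theorem Feasible.sum_le_sum_add_div (h : Feasible xt β γ X' Y Z x y) :
    ∑ v, xt v ≤ ∑ v, x v + (∑ v, y v) / β := by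
  calc ∑ v, xt v ≤ ∑ v, (x v + 1 / β * y v) := sum_le_sum fun v _ => h.2.2.1 v
    _ = ∑ v, x v + (∑ v, y v) / β := by rw [sum_add_distrib, ← mul_sum]; ring

theorem Feasible.spare_le (hβ : 0 < β) (hγ : 0 < γ) (hγβ : γ ≤ 1 / β)
    (h : Feasible xt β γ X' Y Z x y) :
    ∑ v, xt v - ∑ v, (x v + γ * y v) ≤
      (1 / β - γ) * min Y (min (Z / γ) (β * ∑ v, xt v)) := by
  have hcover := h.sum_le_sum_add_div
  obtain ⟨hx, -, -, -, hSY, hSZ⟩ := h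
  have hSZ' : ∑ v, y v ≤ Z / γ := (le_div_iff₀' hγ).mpr (by rwa [mul_sum])
  rw [sum_add_distrib, ← mul_sum]
  calc _ ≤ (1 / β - γ) * min (∑ v, y v) (β * ∑ v, xt v) :=
        sub_add_mul_le_mul_min hβ hγ.le (sum_nonneg fun v _ => hx v) hcover
    _ ≤ _ := by
        refine mul_le_mul_of_nonneg_left ?_ (sub_nonneg.mpr hγβ)
        exact le_min ((min_le_left _ _).trans hSY) (min_le_min_right _ hSZ')

theorem spare_sub_div_eq (xt y : V → ℝ) (β γ : ℝ) :
    ∑ v, xt v - ∑ v, (xt v - y v / β + γ * y v) = (1 / β - γ) * ∑ v, y v := by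
  rw [sum_add_distrib, sum_sub_distrib, ← sum_div, ← mul_sum]
  ring

theorem feasible_sub_div (hβ : 0 < β) (hγβ : γ ≤ 1 / β) (hy : ∀ v, 0 ≤ y v ∧ y v ≤ β * xt v)
    (hY : ∑ v, y v ≤ Y) (hZ : γ * ∑ v, y v ≤ Z) :
    Feasible xt β γ (∑ v, xt v) Y Z (fun v => xt v - y v / β) y := by
  refine ⟨fun v => ?_, fun v => (hy v).1, fun v => ?_, ?_, hY, by rwa [← mul_sum]⟩
  · rw [sub_nonneg, div_le_iff₀' hβ]
    exact (hy v).2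
  · exact le_of_eq (by ring)
  · have hspare := spare_sub_div_eq xt y β γ
    have : 0 ≤ (1 / β - γ) * ∑ v, y v :=
      mul_nonneg (sub_nonneg.mpr hγβ) (sum_nonneg fun v _ => (hy v).1)
    linarith

end

/-- Maximum spare time gained by using the avatar in case A with
`X̃' = X̃`. -/
theorem mustm_max_spare_time {V : Type*} [Fintype V]
    (xt : V → ℝ) (β γ Y Z : ℝ)
    (hxt : ∀ v, 0 ≤ xt v) (hβ : 0 < β) (hγ : 0 < γ) (hγβ : γ ≤ 1 / β)
    (hY : 0 ≤ Y) (hZ : 0 ≤ Z) :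
    IsGreatest
      {s : ℝ | ∃ x y : V → ℝ,
        Feasible xt β γ (∑ v, xt v) Y Z x y ∧
          s = (∑ v, xt v) - ∑ v, (x v + γ * y v)}
      ((1 / β - γ) * min Y (min (Z / γ) (β * ∑ v, xt v))) ∧
    0 ≤ (1 / β - γ) * min Y (min (Z / γ) (β * ∑ v, xt v)) ∧
    (γ = 1 / β →
      (1 / β - γ) * min Y (min (Z / γ) (β * ∑ v, xt v)) = 0) := by
  set M := min Y (min (Z / γ) (β * ∑ v, xt v))
  have hM₀ : 0 ≤ M :=
    le_min hY (le_min (div_nonneg hZ hγ.le) (mul_nonneg hβ.le (sum_nonneg fun v _ => hxt v)))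
  refine ⟨⟨?_, ?_⟩, mul_nonneg (sub_nonneg.mpr hγβ) hM₀, fun h => by rw [h, sub_self, zero_mul]⟩
  · obtain ⟨y, hy, hyM⟩ := exists_sum_eq_of_le_sum (w := fun v => β * xt v)
      (fun v => mul_nonneg hβ.le (hxt v)) hM₀
      (by rw [← mul_sum]; exact (min_le_right _ _).trans (min_le_right _ _))
    refine ⟨fun v => xt v - y v / β, y, feasible_sub_div hβ hγβ hy ?_ ?_, ?_⟩
    · exact hyM ▸ min_le_left _ _
    · rw [hyM, ← le_div_iff₀' hγ]
      exact (min_le_right _ _).trans (min_le_left _ _)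
    · rw [spare_sub_div_eq, hyM]
  · rintro s ⟨x, y, hxy, rfl⟩
    exact hxy.spare_le hβ hγ hγβ
end

section
/- Feasibility characterization of the simplified MUST-M problem in case A: assume 0 < γ ≤ 1/β, β > 0, Y ≥ 0, and Z ≥ 0. Then there exists a feasible pair (x, y) for the simplified MUST-M problem if and only if X̃' ≥ X̃ − (1/β − γ)·min(Y, Z/γ, β·X̃). -/
open Finset

/-!
Summing the constraints of a feasible pair with total avatar time `S = ∑ y` gives
`∑ x ≥ X̃ - t / β` for `t = min S (β X̃)` (coverage, resp. `x ≥ 0`) and `γ S ≥ γ t`, so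
`X̃' ≥ X̃ - (1/β - γ) t`; and `t ≤ min Y (Z/γ) (β X̃)` since `1/β - γ ≥ 0`.
Conversely, if `M` denotes this minimum, splitting every `x̃_v` proportionally,
`y = (M / X̃) x̃` and `x = (1 - M / (β X̃)) x̃`, attains the bound with equality
(if `X̃ = 0` then `M = 0`, and the junk value `M / 0 = 0` yields the split `x = x̃`, `y = 0`).
-/

section Feasible

variable {V : Type*} [Fintype V] {xt x y : V → ℝ} {β γ X' Y Z : ℝ}

theorem Feasible.sub_mul_min_le (hβ : β ≠ 0) (hγ : 0 ≤ γ) (h : Feasible xt β γ X' Y Z x y) :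
    (∑ v, xt v) - (1 / β - γ) * min (∑ v, y v) (β * ∑ v, xt v) ≤ X' := by
  obtain ⟨hx, -, hcov, hobj, -, -⟩ := h
  have hxsum : (∑ v, xt v) - 1 / β * min (∑ v, y v) (β * ∑ v, xt v) ≤ ∑ v, x v := by
    rcases min_choice (∑ v, y v) (β * ∑ v, xt v) with ht | ht <;> rw [ht]
    · have hcovsum := sum_le_sum (s := univ) fun v _ => hcov v
      rw [sum_add_distrib, ← mul_sum] at hcovsum
      linarith
    · rw [← mul_assoc, one_div_mul_cancel hβ, one_mul, sub_self]
      exact sum_nonneg fun v _ => hx v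
  have hysum : γ * min (∑ v, y v) (β * ∑ v, xt v) ≤ γ * ∑ v, y v :=
    mul_le_mul_of_nonneg_left (min_le_left _ _) hγ
  rw [sum_add_distrib, ← mul_sum] at hobj
  linarith

theorem Feasible.min_sum_le_min (hγ : 0 < γ) (h : Feasible xt β γ X' Y Z x y) :
    min (∑ v, y v) (β * ∑ v, xt v) ≤ min Y (min (Z / γ) (β * ∑ v, xt v)) := by
  obtain ⟨-, -, -, -, hYc, hZc⟩ := h
  rw [← mul_sum] at hZc
  exact le_min ((min_le_left _ _).trans hYc) (min_le_min_right _ ((le_div_iff₀' hγ).2 hZc))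

theorem feasible_proportional (hβ : 0 < β) (hxt : ∀ v, 0 ≤ xt v) {c : ℝ} (hc₀ : 0 ≤ c)
    (hcβ : c ≤ β) (hX' : (∑ v, xt v) - (1 / β - γ) * (c * ∑ v, xt v) ≤ X')
    (hY : c * ∑ v, xt v ≤ Y) (hZ : γ * (c * ∑ v, xt v) ≤ Z) :
    Feasible xt β γ X' Y Z (fun v => (1 - c / β) * xt v) (fun v => c * xt v) := by
  refine ⟨fun v => mul_nonneg (sub_nonneg.2 ((div_le_one hβ).2 hcβ)) (hxt v),
    fun v => mul_nonneg hc₀ (hxt v), fun v => le_of_eq (by field_simp; ring), ?_,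
    by rwa [← mul_sum], by rwa [← mul_sum, ← mul_sum]⟩
  convert hX' using 1
  rw [mul_sum, mul_sum, ← sum_sub_distrib]
  exact sum_congr rfl fun v _ => by ring

end Feasible

/-- Feasibility characterization of the simplified MUST-M problem in
case A. -/
theorem mustm_caseA_feasibility {V : Type*} [Fintype V]
    (xt : V → ℝ) (β γ X' Y Z : ℝ)
    (hxt : ∀ v, 0 ≤ xt v) (hβ : 0 < β) (hγ : 0 < γ) (hγβ : γ ≤ 1 / β)
    (hY : 0 ≤ Y) (hZ : 0 ≤ Z) :
    (∃ x y : V → ℝ, Feasible xt β γ X' Y Z x y) ↔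
      (∑ v, xt v) - (1 / β - γ) * min Y (min (Z / γ) (β * ∑ v, xt v)) ≤ X' := by
  set X := ∑ v, xt v
  set M := min Y (min (Z / γ) (β * X))
  constructor
  · rintro ⟨x, y, h⟩
    calc X - (1 / β - γ) * M ≤ X - (1 / β - γ) * min (∑ v, y v) (β * X) :=
          sub_le_sub_left (mul_le_mul_of_nonneg_left (h.min_sum_le_min hγ) (sub_nonneg.2 hγβ)) X
      _ ≤ X' := h.sub_mul_min_le hβ.ne' hγ.le
  · intro hX'
    have hX₀ : 0 ≤ X := sum_nonneg fun v _ => hxt v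
    have hM₀ : 0 ≤ M := le_min hY (le_min (div_nonneg hZ hγ.le) (mul_nonneg hβ.le hX₀))
    have hMβX : M ≤ β * X := (min_le_right _ _).trans (min_le_right _ _)
    have hMX : M / X * X = M := div_mul_cancel_of_imp fun hX => by
      rw [hX, mul_zero] at hMβX
      exact le_antisymm hMβX hM₀
    refine ⟨_, _, feasible_proportional hβ hxt (div_nonneg hM₀ hX₀)
      (div_le_of_le_mul₀ hX₀ hβ.le (by linarith)) (by rwa [hMX])
      (by rw [hMX]; exact min_le_left _ _) ?_⟩
    rw [hMX]
    exact (le_div_iff₀' hγ).1 ((min_le_right _ _).trans (min_le_left _ _))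
end

section
/- When debriefing is less efficient than avatar socialization, the avatar brings no benefit: assume γ > 1/β > 0 and X̃' = X̃. Then every feasible pair (x, y) of the simplified MUST-M problem satisfies ∑_v (x_v + γ·y_v) ≥ X̃, with equality if and only if y_v = 0 and x_v = x̃_v for all v ∈ V; in particular, the unique optimal solution does not use the avatar at all. -/
open Finset

/-- When debriefing is less efficient than avatar socialization
(`γ > 1/β`) and `X̃' = X̃`, the avatar brings no benefit: the objective is at
least `X̃`, with equality iff the avatar is not used at all. -/
theorem mustm_avatar_useless {V : Type*} [Fintype V]
    (xt : V → ℝ) (β γ Y Z : ℝ)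
    (hxt : ∀ v, 0 ≤ xt v) (hβ : 0 < β) (hγβ : 1 / β < γ)
    (hY : 0 ≤ Y) (hZ : 0 ≤ Z)
    (x y : V → ℝ) (hfeas : Feasible xt β γ (∑ v, xt v) Y Z x y) :
    (∑ v, xt v) ≤ ∑ v, (x v + γ * y v) ∧
    ((∑ v, (x v + γ * y v)) = ∑ v, xt v ↔ ∀ v, y v = 0 ∧ x v = xt v) := by
  obtain ⟨hx, hy, hcov, _, _, _⟩ := hfeas
  have hterm : ∀ v, xt v ≤ x v + γ * y v := by
    intro v
    calc xt v ≤ x v + (1 / β) * y v := hcov v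
    _ ≤ x v + γ * y v := by nlinarith [hy v, hγβ]
  have hle : (∑ v, xt v) ≤ ∑ v, (x v + γ * y v) :=
    Finset.sum_le_sum fun v _ => hterm v
  refine ⟨hle, ?_, ?_⟩
  · intro heq v
    have heach : ∀ v ∈ Finset.univ, x v + γ * y v = xt v := by
      intro v _
      exact ((Finset.sum_eq_sum_iff_of_le (fun v _ => hterm v)).1 heq.symm v (Finset.mem_univ v)).symm
    have h1 : x v + γ * y v = xt v := heach v (Finset.mem_univ v)
    have hy0 : y v = 0 := by nlinarith [hcov v, hy v, hγβ]
    constructor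
    · exact hy0
    · rw [hy0] at h1; linarith
  · intro h
    apply Finset.sum_congr rfl
    intro v _
    obtain ⟨h1, h2⟩ := h v
    rw [h1, h2]; ring
end

section
/- Structure of optimal solutions in the strict case A (delegate as much as possible): assume 0 < γ < 1/β, β > 0, Y ≥ 0, Z ≥ 0, and X̃' = X̃. Then every feasible pair (x, y) of the simplified MUST-M problem attaining the minimum objective value satisfies: y_v ≤ β·x̃_v for all v ∈ V, x_v = x̃_v − (1/β)·y_v for all v ∈ V, and ∑_v y_v = min(Y, Z/γ, β·X̃). -/
/-!
Write `c = 1/β - γ > 0` and `M = min Y (min (Z/γ) (β X̃))`. Delegating `y_v` to the avatar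
saves `c * y_v` on alter `v`, but only up to `y_v = β x̃_v`, beyond which `x_v ≥ 0` stops further
savings. Hence every feasible pair costs at least `X̃ - c * ∑ min y_v (β x̃_v) ≥ X̃ - c * M`, while
delegating the same fraction of every `x̃_v` costs exactly `X̃ - c * M`. An optimal pair is tight
in both inequalities, which forces `y_v ≤ β x̃_v`, no slack in the covering constraints, and
`∑ y_v = M`.
-/

open Finset

section Alter

variable {β γ a x y : ℝ}

theorem sub_mul_min_le_cost (hβ : 0 < β) (hγ : 0 ≤ γ) (hx : 0 ≤ x)
    (hcov : a ≤ x + 1 / β * y) :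
    a - (1 / β - γ) * min y (β * a) ≤ x + γ * y := by
  rcases le_total y (β * a) with hy | hy
  · rw [min_eq_left hy]
    linarith
  · rw [min_eq_right hy]
    have : a - (1 / β - γ) * (β * a) = γ * (β * a) := by field_simp; ring
    nlinarith

theorem le_and_eq_of_cost_eq_sub_mul_min (hβ : 0 < β) (hγ : 0 < γ) (hx : 0 ≤ x)
    (hcov : a ≤ x + 1 / β * y) (h : x + γ * y = a - (1 / β - γ) * min y (β * a)) :
    y ≤ β * a ∧ x = a - 1 / β * y := by
  have hy : y ≤ β * a := by
    by_contra! hy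
    rw [min_eq_right hy.le] at h
    have : a - (1 / β - γ) * (β * a) = γ * (β * a) := by field_simp; ring
    nlinarith
  rw [min_eq_left hy] at h
  exact ⟨hy, by linarith⟩

end Alter

section Problem

variable {V : Type*} [Fintype V] {xt : V → ℝ} {β γ X' Y Z : ℝ} {x y : V → ℝ}

theorem Feasible.sum_min_le (hγ : 0 < γ) (h : Feasible xt β γ X' Y Z x y) :
    ∑ v, min (y v) (β * xt v) ≤ min Y (min (Z / γ) (β * ∑ v, xt v)) := by
  obtain ⟨-, -, -, -, hY, hZ⟩ := h
  have hy : ∑ v, min (y v) (β * xt v) ≤ ∑ v, y v := sum_le_sum fun v _ => min_le_left _ _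
  have hZ' : ∑ v, y v ≤ Z / γ := by
    rw [le_div_iff₀ hγ, sum_mul]
    simpa only [mul_comm] using hZ
  refine le_min (hy.trans hY) (le_min (hy.trans hZ') ?_)
  rw [mul_sum]
  exact sum_le_sum fun v _ => min_le_right _ _

/-- The pair delegating the fraction `M / (β X̃)` of every `x̃_v` attains the lower bound. -/
theorem exists_feasible_cost_eq (hxt : ∀ v, 0 ≤ xt v) (hβ : 0 < β) (hγ : 0 < γ)
    (hγβ : γ ≤ 1 / β) (hY : 0 ≤ Y) (hZ : 0 ≤ Z) :
    ∃ x y : V → ℝ, Feasible xt β γ (∑ v, xt v) Y Z x y ∧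
      ∑ v, (x v + γ * y v) =
        ∑ v, xt v - (1 / β - γ) * min Y (min (Z / γ) (β * ∑ v, xt v)) := by
  set X := ∑ v, xt v
  set M := min Y (min (Z / γ) (β * X))
  have hX : 0 ≤ X := sum_nonneg fun v _ => hxt v
  have hM : 0 ≤ M := le_min hY (le_min (div_nonneg hZ hγ.le) (by positivity))
  have hMβX : M ≤ β * X := (min_le_right _ _).trans (min_le_right _ _)
  obtain ⟨t, ht0, ht1, htM⟩ : ∃ t, 0 ≤ t ∧ t ≤ 1 ∧ t * (β * X) = M := by
    rcases hX.eq_or_lt with hX0 | hXpos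
    · exact ⟨0, le_rfl, zero_le_one, by rw [← hX0] at hMβX ⊢; linarith⟩
    · exact ⟨M / (β * X), by positivity, div_le_one_of_le₀ hMβX (by positivity),
        div_mul_cancel₀ _ (by positivity)⟩
  have hsum_y : ∑ v, t * β * xt v = M := by rw [← mul_sum, mul_assoc, htM]
  have hcost : ∑ v, ((1 - t) * xt v + γ * (t * β * xt v)) = X - (1 / β - γ) * M := by
    rw [sum_add_distrib, ← mul_sum, ← mul_sum, hsum_y, ← htM]
    field_simp
    ring
  refine ⟨fun v => (1 - t) * xt v, fun v => t * β * xt v,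
    ⟨fun v => ?_, fun v => ?_, fun v => ?_, ?_, ?_, ?_⟩, hcost⟩
  · exact mul_nonneg (by linarith) (hxt v)
  · exact mul_nonneg (mul_nonneg ht0 hβ.le) (hxt v)
  · exact le_of_eq (by field_simp; ring)
  · rw [hcost]
    exact sub_le_self _ (mul_nonneg (by linarith) hM)
  · rw [hsum_y]
    exact min_le_left _ _
  · rw [← mul_sum, hsum_y, ← le_div_iff₀' hγ]
    exact (min_le_right _ _).trans (min_le_left _ _)

end Problem

/-- Structure of optimal solutions in the strict case A (`0 < γ < 1/β`) with
`X̃' = X̃`: the user delegates as much as possible to the avatar. -/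
theorem mustm_strict_caseA_optimal_structure {V : Type*} [Fintype V]
    (xt : V → ℝ) (β γ Y Z : ℝ)
    (hxt : ∀ v, 0 ≤ xt v) (hβ : 0 < β) (hγ : 0 < γ) (hγβ : γ < 1 / β)
    (hY : 0 ≤ Y) (hZ : 0 ≤ Z)
    (x y : V → ℝ) (hfeas : Feasible xt β γ (∑ v, xt v) Y Z x y)
    (hopt : ∀ x' y' : V → ℝ, Feasible xt β γ (∑ v, xt v) Y Z x' y' →
      (∑ v, (x v + γ * y v)) ≤ ∑ v, (x' v + γ * y' v)) :
    (∀ v, y v ≤ β * xt v) ∧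
    (∀ v, x v = xt v - (1 / β) * y v) ∧
    (∑ v, y v) = min Y (min (Z / γ) (β * ∑ v, xt v)) := by
  set M := min Y (min (Z / γ) (β * ∑ v, xt v))
  obtain ⟨x', y', hfeas', hcost'⟩ := exists_feasible_cost_eq hxt hβ hγ hγβ.le hY hZ
  have hupper := (hopt x' y' hfeas').trans_eq hcost'
  have hlower : ∀ v ∈ univ, xt v - (1 / β - γ) * min (y v) (β * xt v) ≤ x v + γ * y v :=
    fun v _ => sub_mul_min_le_cost hβ hγ.le (hfeas.1 v) (hfeas.2.2.1 v)
  have hsum := sum_le_sum hlower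
  rw [sum_sub_distrib, ← mul_sum] at hsum
  have hc : 0 < 1 / β - γ := by linarith
  have hsavings : (1 / β - γ) * ∑ v, min (y v) (β * xt v) = (1 / β - γ) * M :=
    le_antisymm (mul_le_mul_of_nonneg_left (hfeas.sum_min_le hγ) hc.le) (by linarith)
  have htight : ∀ v, x v + γ * y v = xt v - (1 / β - γ) * min (y v) (β * xt v) := by
    refine fun v => ((sum_eq_sum_iff_of_le hlower).mp ?_ v (mem_univ v)).symm
    rw [sum_sub_distrib, ← mul_sum]
    linarith
  have hpoint v := le_and_eq_of_cost_eq_sub_mul_min hβ hγ (hfeas.1 v) (hfeas.2.2.1 v) (htight v)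
  refine ⟨fun v => (hpoint v).1, fun v => (hpoint v).2, ?_⟩
  simpa only [min_eq_left (hpoint _).1] using mul_left_cancel₀ hc.ne' hsavings
end
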